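/- arXiv:1008.3360 — 2 statements merged into one kernel-verified Lean document; each statement's English description precedes it below -/
import Mathlib

section
/- For n = 1, i.e. ξ, η ∈ ℝ, sup over x with |x| = 1 of ξ x x η equals ξη. Consequently, for any n ≥ 1 and nonzero ξ, η ∈ ℝⁿ, sup over unit vectors x of max(⟨ξ,x⟩⟨x,η⟩, 0) equals (|ξ||η| + ⟨ξ,η⟩)/2. -/
open scoped RealInnerProductSpace

private lemma key_ub {n : ℕ} (ξ η x : EuclideanSpace ℝ (Fin n)) (hx : ‖x‖ = 1) :
    ⟪ξ, x⟫ * ⟪x, η⟫ ≤ (‖ξ‖ * ‖η‖ + ⟪ξ, η⟫) / 2 := by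
  set y : EuclideanSpace ℝ (Fin n) := (2 * ⟪x, η⟫) • x - η with hy
  have hxx : ⟪x, x⟫ = 1 := by
    rw [real_inner_self_eq_norm_sq, hx]; norm_num
  have h1 : ⟪ξ, y⟫ = 2 * ⟪x, η⟫ * ⟪ξ, x⟫ - ⟪ξ, η⟫ := by
    rw [hy, inner_sub_right, real_inner_smul_right]
  have h2 : ⟪y, y⟫ = ⟪η, η⟫ := by
    simp only [hy, inner_sub_left, inner_sub_right, real_inner_smul_left,
      real_inner_smul_right, hxx, real_inner_comm x η]
    ring
  have hyn : ‖y‖ = ‖η‖ := by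
    have e1 := real_inner_self_eq_norm_sq y
    have e2 := real_inner_self_eq_norm_sq η
    have := norm_nonneg y
    have := norm_nonneg η
    nlinarith [h2]
  have h3 : ⟪ξ, y⟫ ≤ ‖ξ‖ * ‖η‖ := by
    calc ⟪ξ, y⟫ ≤ ‖ξ‖ * ‖y‖ := real_inner_le_norm ξ y
    _ = ‖ξ‖ * ‖η‖ := by rw [hyn]
  rw [h1] at h3
  have := real_inner_comm x η
  linarith

theorem stmt_1 :
    (∀ ξ η : ℝ, sSup {t : ℝ | ∃ x : ℝ, |x| = 1 ∧ t = ξ * x * (x * η)} = ξ * η) ∧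
    (∀ n : ℕ, 1 ≤ n → ∀ ξ η : EuclideanSpace ℝ (Fin n), ξ ≠ 0 → η ≠ 0 →
      sSup {t : ℝ | ∃ x : EuclideanSpace ℝ (Fin n), ‖x‖ = 1 ∧ t = max (⟪ξ, x⟫ * ⟪x, η⟫) 0}
        = (‖ξ‖ * ‖η‖ + ⟪ξ, η⟫) / 2) := by
  constructor
  · intro ξ η
    have hset : {t : ℝ | ∃ x : ℝ, |x| = 1 ∧ t = ξ * x * (x * η)} = {ξ * η} := by
      ext t
      simp only [Set.mem_setOf_eq, Set.mem_singleton_iff]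
      constructor
      · rintro ⟨x, hx, rfl⟩
        have hx2 : x * x = 1 := by
          have := sq_abs x
          rw [hx] at this
          nlinarith
        have : ξ * x * (x * η) = ξ * η * (x * x) := by ring
        rw [this, hx2, mul_one]
      · rintro rfl
        exact ⟨1, by norm_num, by ring⟩
    rw [hset, csSup_singleton]
  · intro n hn ξ η hξ hη
    set M : ℝ := (‖ξ‖ * ‖η‖ + ⟪ξ, η⟫) / 2 with hM
    have hξ0 : (0:ℝ) < ‖ξ‖ := norm_pos_iff.mpr hξ
    have hη0 : (0:ℝ) < ‖η‖ := norm_pos_iff.mpr hη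
    have hM0 : 0 ≤ M := by
      have := abs_real_inner_le_norm ξ η
      have := neg_abs_le ⟪ξ, η⟫
      rw [hM]; linarith
    have hub : ∀ t ∈ {t : ℝ | ∃ x : EuclideanSpace ℝ (Fin n),
        ‖x‖ = 1 ∧ t = max (⟪ξ, x⟫ * ⟪x, η⟫) 0}, t ≤ M := by
      rintro t ⟨x, hx, rfl⟩
      exact max_le (key_ub ξ η x hx) hM0
    have hmem : M ∈ {t : ℝ | ∃ x : EuclideanSpace ℝ (Fin n),
        ‖x‖ = 1 ∧ t = max (⟪ξ, x⟫ * ⟪x, η⟫) 0} := by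
      rcases eq_or_lt_of_le hM0 with hM0' | hM0'
      · -- M = 0 : any unit vector works, take x = ξ/‖ξ‖
        refine ⟨‖ξ‖⁻¹ • ξ, ?_, ?_⟩
        · rw [norm_smul, norm_inv, norm_norm, inv_mul_cancel₀ (ne_of_gt hξ0)]
        · have hle := key_ub ξ η (‖ξ‖⁻¹ • ξ)
            (by rw [norm_smul, norm_inv, norm_norm, inv_mul_cancel₀ (ne_of_gt hξ0)])
          rw [← hM0']
          rw [max_eq_right]
          rw [← hM] at hle
          linarith [hle, hM0']
      · -- M > 0 : take x = w/‖w‖ with w = ‖η‖•ξ + ‖ξ‖•η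
        set w : EuclideanSpace ℝ (Fin n) := ‖η‖ • ξ + ‖ξ‖ • η with hw
        have hξw : ⟪ξ, w⟫ = 2 * ‖ξ‖ * M := by
          simp only [hw, inner_add_right, real_inner_smul_right,
            real_inner_self_eq_norm_sq, hM]
          ring
        have hwη : ⟪w, η⟫ = 2 * ‖η‖ * M := by
          simp only [hw, inner_add_left, real_inner_smul_left,
            real_inner_self_eq_norm_sq, hM, real_inner_comm ξ η]
          ring
        have hww : ⟪w, w⟫ = 4 * ‖ξ‖ * ‖η‖ * M := by
          simp only [hw, inner_add_left, inner_add_right, real_inner_smul_left,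
            real_inner_smul_right, real_inner_self_eq_norm_sq, hM,
            real_inner_comm ξ η, norm_smul, norm_norm]
          ring
        have hwpos : (0:ℝ) < ‖w‖ := by
          have : (0:ℝ) < ⟪w, w⟫ := by rw [hww]; positivity
          rw [real_inner_self_eq_norm_sq] at this
          nlinarith [norm_nonneg w]
        refine ⟨‖w‖⁻¹ • w, ?_, ?_⟩
        · rw [norm_smul, norm_inv, norm_norm, inv_mul_cancel₀ (ne_of_gt hwpos)]
        · have hval : ⟪ξ, ‖w‖⁻¹ • w⟫ * ⟪‖w‖⁻¹ • w, η⟫ = M := by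
            rw [real_inner_smul_right, real_inner_smul_left, hξw, hwη]
            have hn2 : ‖w‖ ^ 2 = 4 * ‖ξ‖ * ‖η‖ * M := by
              rw [← real_inner_self_eq_norm_sq, hww]
            have hwne : ‖w‖ ≠ 0 := ne_of_gt hwpos
            field_simp
            nlinarith [hn2]
          rw [hval, max_eq_left (le_of_lt hM0')]
    exact le_antisymm
      (csSup_le ⟨M, hmem⟩ hub)
      (le_csSup ⟨M, hub⟩ hmem)
end

section
/- Let A, B ∈ ℝ^{n×n} be symmetric with B positive definite, and ξ, η ∈ ℝⁿ. Then sup over ν ∈ ℝⁿ with ν ≠ 0 of (ηᵀAν)(νᵀAξ)/(νᵀBν) equals (|B^{−1/2}Aξ| · |B^{−1/2}Aη| + ⟨B^{−1/2}Aξ, B^{−1/2}Aη⟩)/2, provided n ≥ 2 and the vectors B^{−1/2}Aξ and B^{−1/2}Aη are nonzero. -/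
/-!
With `S = B^{1/2}`, symmetry of `A` and `S` gives `ηᵀAν = ⟨η', Sν⟩`, `νᵀAξ = ⟨Sν, ξ'⟩` and
`νᵀBν = |Sν|²`, so after the substitution `w = Sν` the supremum is that of
`⟨η', w⟩⟨w, ξ'⟩ / |w|²` over `w ≠ 0`. This is at most `(|ξ'||η'| + ⟨ξ', η'⟩)/2` by
Cauchy–Schwarz against the reflection of `η'` in the line `ℝw`; the bound is attained at the
bisector `|η'|ξ' + |ξ'|η'`, or, when `ξ'` and `η'` are antiparallel (bound `0`), at any
`w ⊥ ξ'`, which exists because `n ≥ 2`.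
-/

open Matrix
open scoped MatrixOrder

theorem LinearEquiv.setOf_exists_ne_zero_comp {R V W α : Type*} [Semiring R]
    [AddCommMonoid V] [AddCommMonoid W] [Module R V] [Module R W]
    (e : V ≃ₗ[R] W) (g : W → α) :
    {t | ∃ v : V, v ≠ 0 ∧ t = g (e v)} = {t | ∃ w : W, w ≠ 0 ∧ t = g w} := by
  ext t
  constructor
  · rintro ⟨v, hv, rfl⟩
    exact ⟨e v, e.map_ne_zero_iff.mpr hv, rfl⟩
  · rintro ⟨w, hw, rfl⟩
    exact ⟨e.symm w, e.symm.map_ne_zero_iff.mpr hw, by rw [e.apply_symm_apply]⟩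

section InnerProductSpace

open RealInnerProductSpace

variable {E : Type*} [NormedAddCommGroup E] [InnerProductSpace ℝ E]

theorem inner_mul_inner_div_norm_sq_le (a b : E) {w : E} (hw : w ≠ 0) :
    ⟪b, w⟫ * ⟪w, a⟫ / ‖w‖ ^ 2 ≤ (‖a‖ * ‖b‖ + ⟪a, b⟫) / 2 := by
  have hw2 : 0 < ‖w‖ ^ 2 := by positivity
  -- `v / ‖w‖ ^ 2` is the reflection of `b` in the line `ℝ ∙ w`, so `‖v‖ = ‖w‖ ^ 2 * ‖b‖`.
  set v := (2 * ⟪b, w⟫) • w - ‖w‖ ^ 2 • b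
  have hv_sq : ‖v‖ ^ 2 = (‖w‖ ^ 2 * ‖b‖) ^ 2 := by
    simp only [v, norm_sub_sq_real, norm_smul, real_inner_smul_left, real_inner_smul_right,
      real_inner_comm w b, Real.norm_eq_abs, mul_pow, sq_abs]
    ring
  have hv : ‖v‖ = ‖w‖ ^ 2 * ‖b‖ :=
    (pow_left_inj₀ (norm_nonneg _) (by positivity) two_ne_zero).mp hv_sq
  have hav : ⟪a, v⟫ = 2 * ⟪b, w⟫ * ⟪w, a⟫ - ‖w‖ ^ 2 * ⟪a, b⟫ := by
    simp only [v, inner_sub_right, real_inner_smul_right, real_inner_comm a w]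
  have hcs := real_inner_le_norm a v
  rw [hv, hav] at hcs
  rw [div_le_div_iff₀ hw2 two_pos]
  nlinarith

theorem exists_ne_zero_inner_eq_zero [FiniteDimensional ℝ E] (hE : 2 ≤ Module.finrank ℝ E)
    (a : E) : ∃ w : E, w ≠ 0 ∧ ⟪w, a⟫ = 0 := by
  obtain ⟨w, hw, hw0⟩ := Submodule.exists_mem_ne_zero_of_ne_bot (p := (ℝ ∙ a)ᗮ) fun hbot => by
    have hle := finrank_span_le_card (R := ℝ) ({a} : Set E)
    rw [Submodule.orthogonal_eq_bot_iff.mp hbot, finrank_top] at hle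
    simp only [Set.toFinset_singleton, Finset.card_singleton] at hle
    omega
  exact ⟨w, hw0, Submodule.mem_orthogonal_singleton_iff_inner_left.mp hw⟩

theorem exists_inner_mul_inner_div_norm_sq_eq [FiniteDimensional ℝ E]
    (hE : 2 ≤ Module.finrank ℝ E) {a b : E} (ha : a ≠ 0) (hb : b ≠ 0) :
    ∃ w : E, w ≠ 0 ∧ ⟪b, w⟫ * ⟪w, a⟫ / ‖w‖ ^ 2 = (‖a‖ * ‖b‖ + ⟪a, b⟫) / 2 := by
  have ha' : 0 < ‖a‖ := norm_pos_iff.mpr ha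
  have hb' : 0 < ‖b‖ := norm_pos_iff.mpr hb
  set s := ‖a‖ * ‖b‖ + ⟪a, b⟫
  by_cases hw : ‖b‖ • a + ‖a‖ • b = 0
  · have hs : s = 0 := by
      have h := congrArg (⟪a, ·⟫) hw
      simp only [inner_add_right, real_inner_smul_right, inner_zero_right,
        real_inner_self_eq_norm_sq] at h
      have : ‖a‖ * s = 0 := by linear_combination h
      exact (mul_eq_zero.mp this).resolve_left ha'.ne'
    obtain ⟨w, hw0, hwa⟩ := exists_ne_zero_inner_eq_zero hE a
    exact ⟨w, hw0, by rw [hwa, hs]; simp⟩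
  · refine ⟨‖b‖ • a + ‖a‖ • b, hw, ?_⟩
    have hbw : ⟪b, ‖b‖ • a + ‖a‖ • b⟫ = ‖b‖ * s := by
      simp only [s, inner_add_right, real_inner_smul_right, real_inner_self_eq_norm_sq,
        real_inner_comm a b]
      ring
    have hwa : ⟪‖b‖ • a + ‖a‖ • b, a⟫ = ‖a‖ * s := by
      simp only [s, inner_add_left, real_inner_smul_left, real_inner_self_eq_norm_sq,
        real_inner_comm a b]
      ring
    have hww : ‖‖b‖ • a + ‖a‖ • b‖ ^ 2 = 2 * ‖a‖ * ‖b‖ * s := by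
      simp only [s, norm_add_sq_real, real_inner_smul_left, real_inner_smul_right, norm_smul,
        norm_norm, mul_pow]
      ring
    have hs : s ≠ 0 := by
      rintro hs
      rw [hs, mul_zero, sq_eq_zero_iff, norm_eq_zero] at hww
      exact hw hww
    rw [hbw, hwa, hww]
    field_simp

theorem isGreatest_inner_mul_inner_div_norm_sq [FiniteDimensional ℝ E]
    (hE : 2 ≤ Module.finrank ℝ E) {a b : E} (ha : a ≠ 0) (hb : b ≠ 0) :
    IsGreatest {t | ∃ w : E, w ≠ 0 ∧ t = ⟪b, w⟫ * ⟪w, a⟫ / ‖w‖ ^ 2}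
      ((‖a‖ * ‖b‖ + ⟪a, b⟫) / 2) := by
  refine ⟨?_, ?_⟩
  · obtain ⟨w, hw, heq⟩ := exists_inner_mul_inner_div_norm_sq_eq hE ha hb
    exact ⟨w, hw, heq.symm⟩
  · rintro t ⟨w, hw, rfl⟩
    exact inner_mul_inner_div_norm_sq_le a b hw

theorem sSup_dotProduct_mul_dotProduct_div_dotProduct_self {ι : Type*} [Fintype ι]
    (hι : 2 ≤ Fintype.card ι) {a b : ι → ℝ} (ha : a ≠ 0) (hb : b ≠ 0) :
    sSup {t | ∃ w : ι → ℝ, w ≠ 0 ∧ t = (b ⬝ᵥ w) * (w ⬝ᵥ a) / (w ⬝ᵥ w)}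
      = (√(a ⬝ᵥ a) * √(b ⬝ᵥ b) + a ⬝ᵥ b) / 2 := by
  have hdot (x y : ι → ℝ) : x ⬝ᵥ y = ⟪WithLp.toLp 2 x, WithLp.toLp 2 y⟫ := by
    rw [EuclideanSpace.inner_toLp_toLp, star_trivial, dotProduct_comm]
  have hsqrt (x : ι → ℝ) : √(x ⬝ᵥ x) = ‖WithLp.toLp 2 x‖ := by
    rw [hdot, real_inner_self_eq_norm_sq, Real.sqrt_sq (norm_nonneg _)]
  have hset : {t | ∃ w : ι → ℝ, w ≠ 0 ∧ t = (b ⬝ᵥ w) * (w ⬝ᵥ a) / (w ⬝ᵥ w)}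
      = {t | ∃ w : EuclideanSpace ℝ ι, w ≠ 0 ∧
          t = ⟪WithLp.toLp 2 b, w⟫ * ⟪w, WithLp.toLp 2 a⟫ / ‖w‖ ^ 2} := by
    simp_rw [hdot, ← real_inner_self_eq_norm_sq]
    exact (WithLp.linearEquiv 2 ℝ (ι → ℝ)).symm.setOf_exists_ne_zero_comp
      fun w => ⟪WithLp.toLp 2 b, w⟫ * ⟪w, WithLp.toLp 2 a⟫ / ⟪w, w⟫
  rw [hset, hsqrt, hsqrt, hdot a b]
  refine (isGreatest_inner_mul_inner_div_norm_sq ?_ ?_ ?_).csSup_eq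
  · rwa [finrank_euclideanSpace]
  · simpa using ha
  · simpa using hb

end InnerProductSpace

theorem Matrix.dotProduct_mulVec_mul_dotProduct_mulVec_div_of_eq_transpose_mul
    {K m k : Type*} [Field K] [Fintype m] [Fintype k] {A B : Matrix m m K} {S : Matrix k m K}
    (hA : A.IsSymm) (hB : B = Sᵀ * S) {ξ η : m → K} {ξ' η' : k → K}
    (hξ' : Sᵀ *ᵥ ξ' = A *ᵥ ξ) (hη' : Sᵀ *ᵥ η' = A *ᵥ η) (ν : m → K) :
    (η ⬝ᵥ (A *ᵥ ν)) * (ν ⬝ᵥ (A *ᵥ ξ)) / (ν ⬝ᵥ (B *ᵥ ν))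
      = (η' ⬝ᵥ (S *ᵥ ν)) * ((S *ᵥ ν) ⬝ᵥ ξ') / ((S *ᵥ ν) ⬝ᵥ (S *ᵥ ν)) := by
  have hSt (x : m → K) (y : k → K) : x ⬝ᵥ (Sᵀ *ᵥ y) = (S *ᵥ x) ⬝ᵥ y := by
    rw [dotProduct_transpose_mulVec, dotProduct_comm]
  rw [← hξ', hSt, hB, ← mulVec_mulVec, hSt, ← hA.eq, dotProduct_transpose_mulVec, ← hη',
    hSt, dotProduct_comm η']

theorem stmt_12 (n : ℕ) (hn : 2 ≤ n) (A B : Matrix (Fin n) (Fin n) ℝ)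
    (hA : A.IsSymm) (hB : B.PosDef)
    (ξ η : Fin n → ℝ)
    (S : Matrix (Fin n) (Fin n) ℝ) (hS : S = CFC.sqrt B)
    (ξ' η' : Fin n → ℝ)
    (hξ' : ξ' = S⁻¹ *ᵥ (A *ᵥ ξ))
    (hη' : η' = S⁻¹ *ᵥ (A *ᵥ η))
    (hξ'0 : ξ' ≠ 0) (hη'0 : η' ≠ 0) :
    sSup {t : ℝ | ∃ ν : Fin n → ℝ, ν ≠ 0 ∧
        t = (η ⬝ᵥ (A *ᵥ ν)) * (ν ⬝ᵥ (A *ᵥ ξ)) / (ν ⬝ᵥ (B *ᵥ ν))}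
      = (Real.sqrt (ξ' ⬝ᵥ ξ') * Real.sqrt (η' ⬝ᵥ η') + ξ' ⬝ᵥ η') / 2 := by
  have hSpos : S.PosDef := hS ▸ (hB.isStrictlyPositive.sqrt).posDef
  have hSt : Sᵀ = S := hSpos.isHermitian
  have hBS : B = Sᵀ * S := by rw [hSt, hS, CFC.sqrt_mul_sqrt_self B hB.posSemidef.nonneg]
  have hSinv (v : Fin n → ℝ) : Sᵀ *ᵥ (S⁻¹ *ᵥ v) = v := by
    rw [hSt, mulVec_mulVec, mul_nonsing_inv _ (isUnit_iff_isUnit_det S |>.mp hSpos.isUnit),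
      one_mulVec]
  have hξ : Sᵀ *ᵥ ξ' = A *ᵥ ξ := by rw [hξ', hSinv]
  have hη : Sᵀ *ᵥ η' = A *ᵥ η := by rw [hη', hSinv]
  simp_rw [dotProduct_mulVec_mul_dotProduct_mulVec_div_of_eq_transpose_mul hA hBS hξ hη]
  calc _ = sSup {t | ∃ w, w ≠ 0 ∧ t = (η' ⬝ᵥ w) * (w ⬝ᵥ ξ') / (w ⬝ᵥ w)} :=
        congrArg sSup ((S.toLinearEquiv' hSpos.isUnit.invertible).setOf_exists_ne_zero_comp
          fun w => (η' ⬝ᵥ w) * (w ⬝ᵥ ξ') / (w ⬝ᵥ w))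
    _ = _ := sSup_dotProduct_mul_dotProduct_div_dotProduct_self (by simpa) hξ'0 hη'0
end
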